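/- arXiv:1502.06014 — 4 statements merged into one kernel-verified Lean document; each statement's English description precedes it below -/
import Mathlib

section
/- (Mean value theorem for conformable derivatives) Let 0 ≤ a < b and let f : [a,b] → ℝ be continuous on [a,b] and α-differentiable on (a,b) for some α ∈ (0,1). Then there exists c ∈ (a,b) such that T_α(f)(c) = (f(b) − f(a)) / ((1/α)·b^α − (1/α)·a^α). -/
open Filter Topology Set Real

/-- The conformable fractional derivative: `f` has conformable derivative of order `α`
equal to `L` at `t` if `(f (t + ε * t ^ (1 - α)) - f t) / ε → L` as `ε → 0`. -/
def HasConfDeriv (α : ℝ) (f : ℝ → ℝ) (t L : ℝ) : Prop :=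
  Filter.Tendsto (fun ε : ℝ => (f (t + ε * t ^ (1 - α)) - f t) / ε) (𝓝[≠] 0) (𝓝 L)

/-! At `t > 0` the conformable derivative is `t ^ (1 - α) * f' t`, so the theorem is Cauchy's
mean value theorem for `f` and `g x = x ^ α / α`, whose classical derivative `x ^ (α - 1)` is
positive on `(a, b)` (and `g` is continuous at `0`, which covers `a = 0`). -/

lemma tendsto_div_const_nhdsNE_zero {c : ℝ} (hc : c ≠ 0) :
    Tendsto (fun h : ℝ => h / c) (𝓝[≠] 0) (𝓝[≠] 0) := by
  refine tendsto_nhdsWithin_iff.2 ⟨?_, eventually_nhdsWithin_of_forall fun h hh => ?_⟩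
  · simpa using ((tendsto_id (x := 𝓝 (0 : ℝ))).div_const c).mono_left nhdsWithin_le_nhds
  · exact div_ne_zero hh hc

lemma HasConfDeriv.hasDerivAt {α : ℝ} {f : ℝ → ℝ} {t L : ℝ} (ht : 0 < t)
    (h : HasConfDeriv α f t L) : HasDerivAt f (L * t ^ (α - 1)) t := by
  have hc : t ^ (1 - α) ≠ 0 := (rpow_pos_of_pos ht _).ne'
  have hL : L * t ^ (α - 1) = L / t ^ (1 - α) := by
    rw [div_eq_mul_inv, ← rpow_neg ht.le, neg_sub]
  rw [hL, hasDerivAt_iff_tendsto_slope_zero]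
  refine ((h.comp (tendsto_div_const_nhdsNE_zero hc)).div_const (t ^ (1 - α))).congr fun ε => ?_
  simp only [Function.comp_apply, div_mul_cancel₀ _ hc, smul_eq_mul]
  field_simp

lemma hasDerivAt_one_div_mul_rpow {α x : ℝ} (hα : α ≠ 0) (hx : 0 < x) :
    HasDerivAt (fun x => 1 / α * x ^ α) (x ^ (α - 1)) x := by
  simpa [← mul_assoc, hα] using ((hasDerivAt_rpow_const (p := α) (Or.inl hx.ne')).const_mul (1 / α))

theorem conf_mean_value (α a b : ℝ) (f f' : ℝ → ℝ)
    (hα : α ∈ Set.Ioo (0:ℝ) 1) (ha : 0 ≤ a) (hab : a < b)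
    (hcont : ContinuousOn f (Set.Icc a b))
    (hdiff : ∀ t ∈ Set.Ioo a b, HasConfDeriv α f t (f' t)) :
    ∃ c ∈ Set.Ioo a b,
      f' c = (f b - f a) / ((1 / α) * b ^ α - (1 / α) * a ^ α) := by
  have hα0 : 0 < α := hα.1
  have hg : ContinuousOn (fun x : ℝ => 1 / α * x ^ α) (Icc a b) :=
    continuousOn_const.mul (continuousOn_id.rpow_const fun _ _ => Or.inr hα0.le)
  obtain ⟨c, hc, hcauchy⟩ := exists_ratio_hasDerivAt_eq_ratio_slope f (fun x => f' x * x ^ (α - 1))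
    hab hcont (fun x hx => (hdiff x hx).hasDerivAt (ha.trans_lt hx.1)) _ (fun x => x ^ (α - 1)) hg
    fun x hx => hasDerivAt_one_div_mul_rpow hα0.ne' (ha.trans_lt hx.1)
  refine ⟨c, hc, ?_⟩
  have hgab : 1 / α * a ^ α < 1 / α * b ^ α := by gcongr
  have hcpos : 0 < c ^ (α - 1) := rpow_pos_of_pos (ha.trans_lt hc.1) _
  rw [eq_div_iff (sub_ne_zero.2 hgab.ne')]
  exact mul_right_cancel₀ hcpos.ne' (by linear_combination hcauchy)
end

section
/- If f : [0,∞) → ℝ is continuous and α ∈ (0,1), then for all t > 0, T_α(I_α(f))(t) = f(t), where I_α(f)(t) = ∫₀ᵗ f(x)·x^(α−1) dx. -/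
open Filter Topology Set Real

/-- The conformable difference quotient is the ordinary one of `ε ↦ g (t + ε * t ^ (1 - α))`
at `0`, whose derivative is `D * t ^ (1 - α)` by the chain rule. -/
theorem HasDerivAt.hasConfDeriv {g : ℝ → ℝ} {D t : ℝ} (α : ℝ) (hg : HasDerivAt g D t) :
    HasConfDeriv α g t (D * t ^ (1 - α)) := by
  set c := t ^ (1 - α)
  have hline : HasDerivAt (fun ε : ℝ => t + ε * c) c 0 := by
    simpa using ((hasDerivAt_id (0 : ℝ)).mul_const c).const_add t
  have hcomp : HasDerivAt (fun ε => g (t + ε * c)) (D * c) 0 := by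
    refine HasDerivAt.comp (h₂ := g) 0 ?_ hline
    simpa using hg
  refine (hasDerivAt_iff_tendsto_slope_zero.mp hcomp).congr fun ε => ?_
  simp [c, div_eq_inv_mul]

theorem hasDerivAt_integral_mul_rpow {f : ℝ → ℝ} {α t : ℝ} (hα : 0 < α) (ht : 0 < t)
    (hf : ContinuousOn f (Ici 0)) :
    HasDerivAt (fun τ => ∫ x in (0 : ℝ)..τ, f x * x ^ (α - 1)) (f t * t ^ (α - 1)) t := by
  have hcont : ContinuousOn (fun x => f x * x ^ (α - 1)) (Ioi 0) :=
    (hf.mono Ioi_subset_Ici_self).mul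
      (continuousOn_id.rpow_const fun x hx => Or.inl (ne_of_gt hx))
  have hint : IntervalIntegrable (fun x => f x * x ^ (α - 1)) MeasureTheory.volume 0 t :=
    (intervalIntegral.intervalIntegrable_rpow' (by linarith)).continuousOn_mul
      (hf.mono (by simp [uIcc_of_le ht.le, Icc_subset_Ici_self]))
  exact intervalIntegral.integral_hasDerivAt_right hint
    (hcont.stronglyMeasurableAtFilter isOpen_Ioi t ht) (hcont.continuousAt (Ioi_mem_nhds ht))

theorem conf_deriv_conf_integral (α t : ℝ) (f : ℝ → ℝ)
    (hα : α ∈ Set.Ioo (0:ℝ) 1) (ht : 0 < t)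
    (hf : ContinuousOn f (Set.Ici 0)) :
    HasConfDeriv α (fun τ : ℝ => ∫ x in (0:ℝ)..τ, f x * x ^ (α - 1)) t (f t) := by
  have hcancel : f t * t ^ (α - 1) * t ^ (1 - α) = f t := by
    rw [mul_assoc, ← rpow_add ht]
    simp
  simpa only [hcancel] using (hasDerivAt_integral_mul_rpow hα.1 ht hf).hasConfDeriv α
end

section
/- Let X be a Banach space and A the α-infinitesimal generator of a continuously α-differentiable c₀ α-fractional semigroup {T(t)}_{t≥0} on X, 0 < α ≤ 1. If u₀ ∈ D(A), then u(t) = T(t)u₀ is a solution of the α-abstract Cauchy problem u^{(α)}(t) = Au(t) for t > 0, u(0) = u₀. -/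
open Filter Topology Set Real

/-- Vector-valued conformable fractional derivative of order `α` at `t`. -/
def HasConfDerivAt {X : Type*} [NormedAddCommGroup X] [NormedSpace ℝ X]
    (α : ℝ) (f : ℝ → X) (t : ℝ) (L : X) : Prop :=
  Filter.Tendsto (fun ε : ℝ => (ε : ℝ)⁻¹ • (f (t + ε * t ^ (1 - α)) - f t)) (𝓝[≠] 0) (𝓝 L)

/-!
Write `s ⊕ t = rpowSum α s t = (s^α + t^α)^(1/α)`, so that the semigroup law reads
`T (s ⊕ t) = T s ∘ T t`. For `t > 0` the conformable derivative is `t^(1-α) d/dt`, i.e. an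
ordinary derivative in the variable `t^α / α`, in which `τ ↦ τ ⊕ t` is a translation; hence
conformable derivatives are invariant under it. Differentiating `T τ (T t u₀) = T (τ ⊕ t) u₀` at
`τ = s` therefore gives `T' s (T t u₀) = T' (s ⊕ t) u₀`, which tends to `T' t u₀` as `s → 0⁺`
because `T'` is continuous and `s ⊕ t → t`. Everything else is among the hypotheses on `T`.
-/

section ConfDeriv

variable {X : Type*} [NormedAddCommGroup X] [NormedSpace ℝ X]
  {f g : ℝ → X} {t c : ℝ} {D L : X}

theorem hasDerivAt_iff_tendsto_slope_mul (hc : c ≠ 0) :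
    HasDerivAt f D t ↔
      Tendsto (fun ε : ℝ => ε⁻¹ • (f (t + ε * c) - f t)) (𝓝[≠] 0) (𝓝 (c • D)) := by
  have hmap : map (· * c) (𝓝[≠] (0 : ℝ)) = 𝓝[≠] 0 := by
    simpa using (Homeomorph.mulRight₀ c hc).map_punctured_nhds_eq 0
  have hslope : (fun ε : ℝ => ε⁻¹ • (f (t + ε * c) - f t)) =
      fun ε => c • ((ε * c)⁻¹ • (f (t + ε * c) - f t)) := by
    funext ε
    rw [smul_smul, mul_inv, mul_left_comm, mul_inv_cancel₀ hc, mul_one]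
  rw [hasDerivAt_iff_tendsto_slope_zero, hslope, tendsto_const_smul_iff₀ hc]
  conv_lhs => rw [← hmap]
  exact tendsto_map'_iff

variable {α : ℝ}

theorem hasConfDerivAt_iff_hasDerivAt (ht : 0 < t) :
    HasConfDerivAt α f t L ↔ HasDerivAt f (t ^ (α - 1) • L) t := by
  have hpow : t ^ (1 - α) * t ^ (α - 1) = 1 := by
    rw [← rpow_add ht]
    simp
  rw [hasDerivAt_iff_tendsto_slope_mul (rpow_pos_of_pos ht _).ne', smul_smul, hpow, one_smul]
  rfl

theorem HasConfDerivAt.continuousAt (ht : 0 < t) (h : HasConfDerivAt α f t L) :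
    ContinuousAt f t :=
  ((hasConfDerivAt_iff_hasDerivAt ht).mp h).continuousAt

theorem HasConfDerivAt.congr_of_eventuallyEq (ht : 0 < t) (h : HasConfDerivAt α f t L)
    (hfg : g =ᶠ[𝓝 t] f) : HasConfDerivAt α g t L :=
  (hasConfDerivAt_iff_hasDerivAt ht).mpr
    (((hasConfDerivAt_iff_hasDerivAt ht).mp h).congr_of_eventuallyEq hfg)

end ConfDeriv

noncomputable def rpowSum (α s t : ℝ) : ℝ := (s ^ α + t ^ α) ^ (1 / α)

section RpowSum

variable {α s t : ℝ}

theorem rpowSum_pos (hs : 0 < s) (ht : 0 ≤ t) : 0 < rpowSum α s t :=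
  rpow_pos_of_pos (add_pos_of_pos_of_nonneg (rpow_pos_of_pos hs α) (rpow_nonneg ht α)) _

theorem tendsto_rpowSum_nhdsGT_zero (hα : 0 < α) (ht : 0 ≤ t) :
    Tendsto (fun s => rpowSum α s t) (𝓝[>] 0) (𝓝 t) := by
  have hcont : ContinuousAt (fun s => rpowSum α s t) 0 :=
    ((continuousAt_rpow_const 0 α (Or.inr hα.le)).add continuousAt_const).rpow_const
      (Or.inr (one_div_pos.mpr hα).le)
  have hzero : rpowSum α 0 t = t := by
    rw [rpowSum, zero_rpow hα.ne', zero_add, one_div, rpow_rpow_inv ht hα.ne']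
  simpa only [hzero] using hcont.tendsto.mono_left nhdsWithin_le_nhds

theorem hasDerivAt_rpowSum_left (hα : α ≠ 0) (hs : 0 < s) (ht : 0 ≤ t) :
    HasDerivAt (fun τ => rpowSum α τ t) (s ^ (α - 1) * rpowSum α s t ^ (1 - α)) s := by
  have hB : 0 < s ^ α + t ^ α :=
    add_pos_of_pos_of_nonneg (rpow_pos_of_pos hs α) (rpow_nonneg ht α)
  have hpow : rpowSum α s t ^ (1 - α) = (s ^ α + t ^ α) ^ (1 / α - 1) := by
    rw [rpowSum, ← rpow_mul hB.le]
    congr 1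
    field_simp
  have h := ((hasDerivAt_rpow_const (Or.inl hs.ne')).add_const (t ^ α)).rpow_const
    (p := 1 / α) (Or.inl hB.ne')
  refine h.congr_deriv ?_
  rw [hpow]
  field_simp

end RpowSum

section Semigroup

variable {X : Type*} [NormedAddCommGroup X] [NormedSpace ℝ X] {α s t : ℝ}

theorem HasConfDerivAt.comp_rpowSum_left {f : ℝ → X} {L : X} (hα : α ≠ 0) (hs : 0 < s)
    (ht : 0 ≤ t) (h : HasConfDerivAt α f (rpowSum α s t) L) :
    HasConfDerivAt α (fun τ => f (rpowSum α τ t)) s L := by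
  have hr : 0 < rpowSum α s t := rpowSum_pos hs ht
  have hcomp :=
    ((hasConfDerivAt_iff_hasDerivAt hr).mp h).scomp s (hasDerivAt_rpowSum_left hα hs ht)
  rw [hasConfDerivAt_iff_hasDerivAt hs]
  refine hcomp.congr_deriv ?_
  rw [smul_smul, mul_assoc, ← rpow_add hr]
  simp

variable {T : ℝ → X →L[ℝ] X}

theorem apply_rpowSum_eq (hα : α ≠ 0)
    (hlaw : ∀ s ≥ (0:ℝ), ∀ t ≥ (0:ℝ),
      T ((s + t) ^ (1 / α)) = T (s ^ (1 / α)) ∘L T (t ^ (1 / α)))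
    (hs : 0 ≤ s) (ht : 0 ≤ t) (x : X) : T (rpowSum α s t) x = T s (T t x) := by
  have h := hlaw (s ^ α) (rpow_nonneg hs α) (t ^ α) (rpow_nonneg ht α)
  rw [one_div, rpow_rpow_inv hs hα, rpow_rpow_inv ht hα] at h
  rw [rpowSum, one_div, h, ContinuousLinearMap.comp_apply]

theorem hasConfDerivAt_semigroup_apply (hα : α ≠ 0)
    (hlaw : ∀ s ≥ (0:ℝ), ∀ t ≥ (0:ℝ),
      T ((s + t) ^ (1 / α)) = T (s ^ (1 / α)) ∘L T (t ^ (1 / α)))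
    (hs : 0 < s) (ht : 0 ≤ t) {x L : X}
    (h : HasConfDerivAt α (fun τ => T τ x) (rpowSum α s t) L) :
    HasConfDerivAt α (fun τ => T τ (T t x)) s L := by
  refine (h.comp_rpowSum_left hα hs ht).congr_of_eventuallyEq hs ?_
  filter_upwards [Ioi_mem_nhds hs] with τ hτ
  exact (apply_rpowSum_eq hα hlaw (le_of_lt hτ) ht x).symm

end Semigroup

theorem conf_abstract_cauchy_existence_general
    {X : Type*} [NormedAddCommGroup X] [NormedSpace ℝ X]
    (α : ℝ) (hα : α ∈ Set.Ioc (0:ℝ) 1)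
    (T : ℝ → (X →L[ℝ] X)) (T' : ℝ → X → X)
    (hT0 : T 0 = 1)
    (hlaw : ∀ s ≥ (0:ℝ), ∀ t ≥ (0:ℝ),
      T ((s + t) ^ (1 / α)) = T (s ^ (1 / α)) ∘L T (t ^ (1 / α)))
    (hc0 : ∀ x : X, Filter.Tendsto (fun t => T t x) (𝓝[>] 0) (𝓝 x))
    (hderiv : ∀ t > (0:ℝ), ∀ x : X, HasConfDerivAt α (fun τ => T τ x) t (T' t x))
    (hcont : ∀ x : X, ContinuousOn (fun t => T' t x) (Set.Ioi 0))
    (u₀ : X) :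
    -- the function u(t) = T(t)u₀ :
    (T 0 u₀ = u₀) ∧
    ContinuousOn (fun t => T t u₀) (Set.Ici 0) ∧
    ContinuousOn (fun t => T' t u₀) (Set.Ioi 0) ∧
    (∀ t > (0:ℝ),
      -- u is α-differentiable at t with u^{(α)}(t) = T'(t)u₀ …
      HasConfDerivAt α (fun τ => T τ u₀) t (T' t u₀) ∧
      -- … and u(t) = T(t)u₀ lies in D(A) with A u(t) = u^{(α)}(t)
      Filter.Tendsto (fun s => T' s (T t u₀)) (𝓝[>] 0) (𝓝 (T' t u₀))) := by
  have hα0 : α ≠ 0 := hα.1.ne'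
  have hinit : T 0 u₀ = u₀ := by simp [hT0]
  have hcontT : ContinuousOn (fun t => T t u₀) (Ici 0) := by
    intro t ht
    rcases (mem_Ici.mp ht).eq_or_lt with rfl | htpos
    · rw [← continuousWithinAt_Ioi_iff_Ici, ContinuousWithinAt, hinit]
      exact hc0 u₀
    · exact ((hderiv t htpos u₀).continuousAt htpos).continuousWithinAt
  refine ⟨hinit, hcontT, hcont u₀, fun t ht => ⟨hderiv t ht u₀, ?_⟩⟩
  have hshift : ∀ s > (0:ℝ), T' s (T t u₀) = T' (rpowSum α s t) u₀ := fun s hs =>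
    tendsto_nhds_unique (hderiv s hs (T t u₀))
      (hasConfDerivAt_semigroup_apply hα0 hlaw hs ht.le (hderiv _ (rpowSum_pos hs ht.le) u₀))
  have hlim : Tendsto (fun s => T' (rpowSum α s t) u₀) (𝓝[>] 0) (𝓝 (T' t u₀)) :=
    ((hcont u₀).continuousAt (Ioi_mem_nhds ht)).tendsto.comp
      (tendsto_rpowSum_nhdsGT_zero hα.1 ht.le)
  exact hlim.congr' (eventually_nhdsWithin_of_forall fun s hs => (hshift s hs).symm)

/-- If `u₀` is in the domain of the generator `A` (with `A u₀ = Au₀`), then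
`u t = T t u₀` solves the α-abstract Cauchy problem `u^{(α)} = A u`, `u 0 = u₀`. -/
theorem conf_abstract_cauchy_existence
    {X : Type*} [NormedAddCommGroup X] [NormedSpace ℝ X] [CompleteSpace X]
    (α : ℝ) (hα : α ∈ Set.Ioc (0:ℝ) 1)
    (T : ℝ → (X →L[ℝ] X)) (T' : ℝ → X → X)
    (hT0 : T 0 = 1)
    (hlaw : ∀ s ≥ (0:ℝ), ∀ t ≥ (0:ℝ),
      T ((s + t) ^ (1 / α)) = T (s ^ (1 / α)) ∘L T (t ^ (1 / α)))
    (hc0 : ∀ x : X, Filter.Tendsto (fun t => T t x) (𝓝[>] 0) (𝓝 x))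
    (hderiv : ∀ t > (0:ℝ), ∀ x : X, HasConfDerivAt α (fun τ => T τ x) t (T' t x))
    (hcont : ∀ x : X, ContinuousOn (fun t => T' t x) (Set.Ioi 0))
    (u₀ Au₀ : X)
    (hgen : Filter.Tendsto (fun t => T' t u₀) (𝓝[>] 0) (𝓝 Au₀)) :
    -- the function u(t) = T(t)u₀ :
    (T 0 u₀ = u₀) ∧
    ContinuousOn (fun t => T t u₀) (Set.Ici 0) ∧
    ContinuousOn (fun t => T' t u₀) (Set.Ioi 0) ∧
    (∀ t > (0:ℝ),
      -- u is α-differentiable at t with u^{(α)}(t) = T'(t)u₀ …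
      HasConfDerivAt α (fun τ => T τ u₀) t (T' t u₀) ∧
      -- … and u(t) = T(t)u₀ lies in D(A) with A u(t) = u^{(α)}(t)
      Filter.Tendsto (fun s => T' s (T t u₀)) (𝓝[>] 0) (𝓝 (T' t u₀))) :=
  conf_abstract_cauchy_existence_general α hα T T' hT0 hlaw hc0 hderiv hcont u₀
end

section
/- Let X be a Banach space and A the α-infinitesimal generator of a continuously α-differentiable c₀ α-fractional semigroup {T(t)}_{t≥0}, 0 < α ≤ 1. If u₀ ∈ D(A), then the α-abstract Cauchy problem u^{(α)}(t) = Au(t), u(0) = u₀ has at most one solution; any solution equals u(t) = T(t)u₀. -/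
/-!
The substitution `t = r ^ (1 / α)` turns the α-semigroup into the ordinary C₀-semigroup
`S r = T (r ^ (1 / α))` and a solution `u` into a classical solution `v r = u (r ^ (1 / α))` of
`v' = α⁻¹ A v`. For `y ∈ D(A)` the orbit derivative is `S' r y = S r (α⁻¹ A y)`, so
`s ↦ S (τ - s) (v s)` has zero derivative on `(0, τ)`; letting `s → 0` gives
`S (τ - s) (v s) = S τ u₀`, and with `τ = s + h`, `h → 0` this becomes `v s = S s u₀`.
Passing to these limits needs bounds on `‖S‖` near each `r > 0`, which come from Banach–Steinhaus.
-/

open Filter Topology Set Real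

theorem hasConfDerivAt_iff_hasDerivAt_comp {X : Type*} [NormedAddCommGroup X] [NormedSpace ℝ X]
    {α : ℝ} {f : ℝ → X} {t : ℝ} {L : X} :
    HasConfDerivAt α f t L ↔ HasDerivAt (fun ε => f (t + ε * t ^ (1 - α))) L 0 := by
  rw [HasConfDerivAt, hasDerivAt_iff_tendsto_slope_zero]
  simp

theorem HasConfDerivAt.hasDerivAt {X : Type*} [NormedAddCommGroup X] [NormedSpace ℝ X]
    {α : ℝ} {f : ℝ → X} {t : ℝ} {L : X} (hf : HasConfDerivAt α f t L) (ht : 0 < t) :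
    HasDerivAt f (t ^ (α - 1) • L) t := by
  have hc : t ^ (1 - α) ≠ 0 := (Real.rpow_pos_of_pos ht _).ne'
  have hscale : HasDerivAt (fun x => (x - t) / t ^ (1 - α)) (t ^ (α - 1)) t := by
    have h := ((hasDerivAt_id t).sub_const t).div_const (t ^ (1 - α))
    rwa [one_div, ← Real.rpow_neg ht.le, neg_sub] at h
  have hφ : HasDerivAt (fun ε => f (t + ε * t ^ (1 - α))) L ((t - t) / t ^ (1 - α)) := by
    rw [sub_self, zero_div]
    exact hasConfDerivAt_iff_hasDerivAt_comp.mp hf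
  convert hφ.scomp t hscale using 1
  funext x
  simp [div_mul_cancel₀ _ hc]

theorem HasConfDerivAt.hasDerivAt_comp_rpow {X : Type*} [NormedAddCommGroup X]
    [NormedSpace ℝ X] {α : ℝ} {f : ℝ → X} {τ : ℝ} {L : X}
    (hf : HasConfDerivAt α f (τ ^ (1 / α)) L) (hα : 0 < α) (hτ : 0 < τ) :
    HasDerivAt (fun r => f (r ^ (1 / α))) ((1 / α) • L) τ := by
  have h := (hf.hasDerivAt (Real.rpow_pos_of_pos hτ _)).scomp τ
    (Real.hasDerivAt_rpow_const (p := 1 / α) (Or.inl hτ.ne'))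
  refine h.congr_deriv ?_
  rw [smul_smul, ← Real.rpow_mul hτ.le, mul_assoc, ← Real.rpow_add hτ]
  congr 1
  field_simp
  simp

theorem tendsto_rpow_nhdsGT_zero {y : ℝ} (hy : 0 < y) :
    Tendsto (fun x : ℝ => x ^ y) (𝓝[>] 0) (𝓝[>] 0) := by
  refine tendsto_nhdsWithin_of_tendsto_nhds_of_eventually_within _ ?_ ?_
  · simpa [Real.zero_rpow hy.ne'] using
      (Real.continuousAt_rpow_const 0 y (Or.inr hy.le)).tendsto.mono_left nhdsWithin_le_nhds
  · filter_upwards [self_mem_nhdsWithin] with x hx using Real.rpow_pos_of_pos hx y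

section OperatorFamilies

variable {𝕜 E F : Type*} [NontriviallyNormedField 𝕜] [NormedAddCommGroup E] [NormedSpace 𝕜 E]
  [NormedAddCommGroup F] [NormedSpace 𝕜 F]

theorem IsCompact.exists_bound_of_continuousOn_apply [CompleteSpace E] {α : Type*}
    [TopologicalSpace α] {K : Set α} (hK : IsCompact K) {L : α → E →L[𝕜] F}
    (hL : ∀ x, ContinuousOn (fun a => L a x) K) : ∃ M, ∀ a ∈ K, ‖L a‖ ≤ M := by
  obtain ⟨M, hM⟩ := banach_steinhaus (g := fun a : K => L a) fun x => by
    obtain ⟨C, hC⟩ := hK.exists_bound_of_continuousOn (hL x)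
    exact ⟨C, fun a => hC a a.2⟩
  exact ⟨M, fun a ha => hM ⟨a, ha⟩⟩

theorem Filter.Tendsto.clm_apply_of_eventually_norm_le {ι : Type*} {l : Filter ι}
    {L : ι → E →L[𝕜] F} {x : ι → E} {x₀ : E} {y : F} {M : ℝ}
    (hx : Tendsto x l (𝓝 x₀)) (hL : Tendsto (fun i => L i x₀) l (𝓝 y))
    (hM : ∀ᶠ i in l, ‖L i‖ ≤ M) : Tendsto (fun i => L i (x i)) l (𝓝 y) := by
  have hsmall : Tendsto (fun i => L i (x i - x₀)) l (𝓝 0) :=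
    squeeze_zero_norm' (hM.mono fun i hi => (L i).le_of_opNorm_le hi _)
      (by simpa using (hx.sub_const x₀).norm.const_mul M)
  simpa using hsmall.add hL

/-- A product rule in which `L` need only be strongly differentiable, at the price of
local boundedness. -/
theorem HasDerivAt.clm_apply_of_eventually_norm_le {L : 𝕜 → E →L[𝕜] F} {v : 𝕜 → E} {s : 𝕜}
    {v' : E} {L' : F} {M : ℝ} (hv : HasDerivAt v v' s)
    (hL : HasDerivAt (fun x => L x (v s)) L' s) (hLc : ContinuousAt (fun x => L x v') s)
    (hM : ∀ᶠ x in 𝓝 s, ‖L x‖ ≤ M) : HasDerivAt (fun x => L x (v x)) (L s v' + L') s := by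
  rw [hasDerivAt_iff_tendsto_slope] at hv hL ⊢
  have hslope : ∀ x, slope (fun x => L x (v x)) s x
      = L x (slope v s x) + slope (fun x => L x (v s)) s x := by
    intro x
    simp only [slope_def_module, map_sub, map_smul, ← smul_add]
    abel_nf
  refine Tendsto.congr (fun x => (hslope x).symm) ?_
  exact (hv.clm_apply_of_eventually_norm_le (hLc.tendsto.mono_left nhdsWithin_le_nhds)
    (hM.filter_mono nhdsWithin_le_nhds)).add hL

end OperatorFamilies

structure IsDifferentiableC0Semigroup {E : Type*} [NormedAddCommGroup E] [NormedSpace ℝ E]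
    (S : ℝ → E →L[ℝ] E) (D : ℝ → E → E) : Prop where
  map_add : ∀ σ ≥ (0:ℝ), ∀ ρ ≥ (0:ℝ), S (σ + ρ) = S σ ∘L S ρ
  tendsto_nhdsGT_zero : ∀ x, Tendsto (fun r => S r x) (𝓝[>] 0) (𝓝 x)
  hasDerivAt : ∀ r > (0:ℝ), ∀ x, HasDerivAt (fun ρ => S ρ x) (D r x) r

namespace IsDifferentiableC0Semigroup

variable {E : Type*} [NormedAddCommGroup E] [NormedSpace ℝ E] {S : ℝ → E →L[ℝ] E}
  {D : ℝ → E → E}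

theorem continuousAt_apply (hS : IsDifferentiableC0Semigroup S D) {r : ℝ} (hr : 0 < r)
    (x : E) : ContinuousAt (fun ρ => S ρ x) r :=
  (hS.hasDerivAt r hr x).continuousAt

theorem exists_eventually_norm_le [CompleteSpace E] (hS : IsDifferentiableC0Semigroup S D)
    {r : ℝ} (hr : 0 < r) : ∃ M, ∀ᶠ ρ in 𝓝 r, ‖S ρ‖ ≤ M := by
  obtain ⟨M, hM⟩ := (isCompact_Icc (a := r / 2) (b := r + 1)).exists_bound_of_continuousOn_apply
    fun x ρ hρ => (hS.continuousAt_apply (by linarith [hρ.1]) x).continuousWithinAt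
  exact ⟨M, eventually_of_mem (Icc_mem_nhds (by linarith) (by linarith)) hM⟩

theorem deriv_eq_apply_of_tendsto [CompleteSpace E] (hS : IsDifferentiableC0Semigroup S D)
    {r : ℝ} (hr : 0 < r) {y w : E} (hy : Tendsto (fun q => D q y) (𝓝[>] 0) (𝓝 w)) :
    D r y = S r w := by
  have hfactor : ∀ q ∈ Ioo 0 r, D r y = S (r - q) (D q y) := by
    rintro q ⟨hq, hqr⟩
    have hshift : HasDerivAt (fun ρ => S (r - q) (S (ρ - (r - q)) y)) (S (r - q) (D q y)) r :=
      (S (r - q)).hasFDerivAt.comp_hasDerivAt r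
        (HasDerivAt.comp_sub_const r (r - q) (by rw [sub_sub_cancel]; exact hS.hasDerivAt q hq y))
    refine (hS.hasDerivAt r hr y).unique (hshift.congr_of_eventuallyEq ?_)
    filter_upwards [eventually_gt_nhds (show r - q < r by linarith)] with ρ hρ
    rw [← ContinuousLinearMap.comp_apply, ← hS.map_add _ (by linarith) _ (by linarith),
      add_sub_cancel]
  obtain ⟨M, hM⟩ := hS.exists_eventually_norm_le hr
  have hsub : Tendsto (fun q => r - q) (𝓝[>] 0) (𝓝 r) :=
    ((continuous_const.sub continuous_id).tendsto' 0 r (by simp)).mono_left nhdsWithin_le_nhds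
  have hlim : Tendsto (fun q => S (r - q) (D q y)) (𝓝[>] 0) (𝓝 (S r w)) :=
    hy.clm_apply_of_eventually_norm_le ((hS.continuousAt_apply hr w).tendsto.comp hsub)
      (hsub.eventually hM)
  refine tendsto_nhds_unique (tendsto_const_nhds.congr' ?_) hlim
  filter_upwards [Ioo_mem_nhdsGT hr] using hfactor

theorem hasDerivAt_apply_sub_eq_zero [CompleteSpace E] (hS : IsDifferentiableC0Semigroup S D)
    {v : ℝ → E} {w : E} {τ s : ℝ} (hs : s < τ) (hv : HasDerivAt v w s)
    (hgen : Tendsto (fun q => D q (v s)) (𝓝[>] 0) (𝓝 w)) :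
    HasDerivAt (fun p => S (τ - p) (v p)) 0 s := by
  have hr : 0 < τ - s := sub_pos.mpr hs
  obtain ⟨M, hM⟩ := hS.exists_eventually_norm_le hr
  have hsub : Tendsto (fun p => τ - p) (𝓝 s) (𝓝 (τ - s)) :=
    (continuous_const.sub continuous_id).tendsto s
  have h := hv.clm_apply_of_eventually_norm_le ((hS.hasDerivAt _ hr (v s)).comp_const_sub τ s)
    ((hS.continuousAt_apply hr w).comp hsub) (hsub.eventually hM)
  rwa [hS.deriv_eq_apply_of_tendsto hr hgen, add_neg_cancel] at h

section Solution

variable [CompleteSpace E] {v w : ℝ → E} {v₀ : E}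

theorem apply_sub_eq_apply (hS : IsDifferentiableC0Semigroup S D)
    (hv₀ : Tendsto v (𝓝[>] 0) (𝓝 v₀)) (hv : ∀ r > 0, HasDerivAt v (w r) r)
    (hgen : ∀ r > 0, Tendsto (fun q => D q (v r)) (𝓝[>] 0) (𝓝 (w r)))
    {τ s : ℝ} (hs : s ∈ Ioo 0 τ) : S (τ - s) (v s) = S τ v₀ := by
  have hτ : 0 < τ := hs.1.trans hs.2
  have hderiv : ∀ p ∈ Ioo 0 τ, HasDerivAt (fun p => S (τ - p) (v p)) 0 p := fun p hp =>
    hS.hasDerivAt_apply_sub_eq_zero hp.2 (hv p hp.1) (hgen p hp.1)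
  obtain ⟨c, hc⟩ := isOpen_Ioo.exists_is_const_of_deriv_eq_zero isPreconnected_Ioo
    (fun p hp => (hderiv p hp).differentiableAt.differentiableWithinAt)
    (fun p hp => (hderiv p hp).deriv)
  obtain ⟨M, hM⟩ := hS.exists_eventually_norm_le hτ
  have hsub : Tendsto (fun p => τ - p) (𝓝[>] 0) (𝓝 τ) :=
    ((continuous_const.sub continuous_id).tendsto' 0 τ (by simp)).mono_left nhdsWithin_le_nhds
  have hlim : Tendsto (fun p => S (τ - p) (v p)) (𝓝[>] 0) (𝓝 (S τ v₀)) :=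
    hv₀.clm_apply_of_eventually_norm_le ((hS.continuousAt_apply hτ v₀).tendsto.comp hsub)
      (hsub.eventually hM)
  have hconst : Tendsto (fun p => S (τ - p) (v p)) (𝓝[>] 0) (𝓝 c) :=
    tendsto_const_nhds.congr' (eventually_of_mem (Ioo_mem_nhdsGT hτ) fun p hp => (hc p hp).symm)
  rw [hc s hs, tendsto_nhds_unique hconst hlim]

theorem eq_apply_of_hasDerivAt (hS : IsDifferentiableC0Semigroup S D)
    (hv₀ : Tendsto v (𝓝[>] 0) (𝓝 v₀)) (hv : ∀ r > 0, HasDerivAt v (w r) r)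
    (hgen : ∀ r > 0, Tendsto (fun q => D q (v r)) (𝓝[>] 0) (𝓝 (w r))) {r : ℝ} (hr : 0 < r) :
    v r = S r v₀ := by
  have hshifted : ∀ h ∈ Ioi (0:ℝ), S h (v r) = S h (S r v₀) := fun h hh => by
    have := hS.apply_sub_eq_apply hv₀ hv hgen (τ := r + h) ⟨hr, lt_add_of_pos_right r hh⟩
    rwa [add_sub_cancel_left, add_comm, hS.map_add h (le_of_lt hh) r hr.le] at this
  exact tendsto_nhds_unique ((hS.tendsto_nhdsGT_zero (v r)).congr'
    (eventually_of_mem self_mem_nhdsWithin hshifted)) (hS.tendsto_nhdsGT_zero _)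

end Solution

end IsDifferentiableC0Semigroup

theorem isDifferentiableC0Semigroup_comp_rpow {X : Type*} [NormedAddCommGroup X]
    [NormedSpace ℝ X] {α : ℝ} (hα : 0 < α) {T : ℝ → X →L[ℝ] X} {T' : ℝ → X → X}
    (hlaw : ∀ s ≥ (0:ℝ), ∀ t ≥ (0:ℝ),
      T ((s + t) ^ (1 / α)) = T (s ^ (1 / α)) ∘L T (t ^ (1 / α)))
    (hc0 : ∀ x : X, Tendsto (fun t => T t x) (𝓝[>] 0) (𝓝 x))
    (hTderiv : ∀ t > (0:ℝ), ∀ x : X, HasConfDerivAt α (fun τ => T τ x) t (T' t x)) :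
    IsDifferentiableC0Semigroup (fun r => T (r ^ (1 / α)))
      (fun r x => (1 / α) • T' (r ^ (1 / α)) x) where
  map_add := hlaw
  tendsto_nhdsGT_zero x := (hc0 x).comp (tendsto_rpow_nhdsGT_zero (by positivity))
  hasDerivAt r hr x := (hTderiv _ (Real.rpow_pos_of_pos hr _) x).hasDerivAt_comp_rpow hα hr

/-- Membership of `y` in `D(A)` with value `Ay` is expressed
by `Tendsto (fun s => T' s y) (𝓝[>] 0) (𝓝 Ay)`. -/
theorem conf_abstract_cauchy_uniqueness_general
    {X : Type*} [NormedAddCommGroup X] [NormedSpace ℝ X] [CompleteSpace X]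
    (α : ℝ) (hα : α ∈ Set.Ioc (0:ℝ) 1)
    (T : ℝ → (X →L[ℝ] X)) (T' : ℝ → X → X)
    (hT0 : T 0 = 1)
    (hlaw : ∀ s ≥ (0:ℝ), ∀ t ≥ (0:ℝ),
      T ((s + t) ^ (1 / α)) = T (s ^ (1 / α)) ∘L T (t ^ (1 / α)))
    (hc0 : ∀ x : X, Filter.Tendsto (fun t => T t x) (𝓝[>] 0) (𝓝 x))
    (hTderiv : ∀ t > (0:ℝ), ∀ x : X, HasConfDerivAt α (fun τ => T τ x) t (T' t x))
    (u₀ : X)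
    -- a solution u of the α-abstract Cauchy problem, with α-derivative u' and A u(t) = Au t :
    (u u' Au : ℝ → X)
    (hu0 : u 0 = u₀)
    (hucont : ContinuousOn u (Set.Ici 0))
    (huderiv : ∀ t > (0:ℝ), HasConfDerivAt α u t (u' t))
    (hdom : ∀ t > (0:ℝ), Filter.Tendsto (fun s => T' s (u t)) (𝓝[>] 0) (𝓝 (Au t)))
    (heq : ∀ t > (0:ℝ), u' t = Au t) :
    ∀ t ≥ (0:ℝ), u t = T t u₀ := by
  obtain ⟨hα, -⟩ := hα
  have hrpow : Tendsto (fun r : ℝ => r ^ (1 / α)) (𝓝[>] 0) (𝓝[>] 0) :=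
    tendsto_rpow_nhdsGT_zero (by positivity)
  have hS := isDifferentiableC0Semigroup_comp_rpow hα hlaw hc0 hTderiv
  have hv₀ : Tendsto (fun r => u (r ^ (1 / α))) (𝓝[>] 0) (𝓝 u₀) :=
    hu0 ▸ (hucont 0 self_mem_Ici).tendsto.comp
      (hrpow.mono_right (nhdsWithin_mono _ Ioi_subset_Ici_self))
  have hv : ∀ r > 0, HasDerivAt (fun r => u (r ^ (1 / α))) ((1 / α) • Au (r ^ (1 / α))) r :=
    fun r hr => heq _ (Real.rpow_pos_of_pos hr _) ▸
      (huderiv _ (Real.rpow_pos_of_pos hr _)).hasDerivAt_comp_rpow hα hr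
  have hgen : ∀ r > 0, Tendsto (fun q => (1 / α) • T' (q ^ (1 / α)) (u (r ^ (1 / α))))
      (𝓝[>] 0) (𝓝 ((1 / α) • Au (r ^ (1 / α)))) :=
    fun r hr => ((hdom _ (Real.rpow_pos_of_pos hr _)).comp hrpow).const_smul _
  intro t ht
  rcases ht.eq_or_lt with rfl | ht
  · simp [hu0, hT0]
  · have h := hS.eq_apply_of_hasDerivAt hv₀ hv hgen (Real.rpow_pos_of_pos ht α)
    rwa [one_div, Real.rpow_rpow_inv ht.le hα.ne'] at h

/-- Uniqueness for the α-abstract Cauchy problem: any solution `u` with `u 0 = u₀`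
coincides with `t ↦ T t u₀`. Membership of `y` in `D(A)` with value `Ay` is expressed
by `Tendsto (fun s => T' s y) (𝓝[>] 0) (𝓝 Ay)`. -/
theorem conf_abstract_cauchy_uniqueness
    {X : Type*} [NormedAddCommGroup X] [NormedSpace ℝ X] [CompleteSpace X]
    (α : ℝ) (hα : α ∈ Set.Ioc (0:ℝ) 1)
    (T : ℝ → (X →L[ℝ] X)) (T' : ℝ → X → X)
    (hT0 : T 0 = 1)
    (hlaw : ∀ s ≥ (0:ℝ), ∀ t ≥ (0:ℝ),
      T ((s + t) ^ (1 / α)) = T (s ^ (1 / α)) ∘L T (t ^ (1 / α)))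
    (hc0 : ∀ x : X, Filter.Tendsto (fun t => T t x) (𝓝[>] 0) (𝓝 x))
    (hTderiv : ∀ t > (0:ℝ), ∀ x : X, HasConfDerivAt α (fun τ => T τ x) t (T' t x))
    (hTcont : ∀ x : X, ContinuousOn (fun t => T' t x) (Set.Ioi 0))
    (u₀ Au₀ : X)
    (hgen : Filter.Tendsto (fun t => T' t u₀) (𝓝[>] 0) (𝓝 Au₀))
    -- a solution u of the α-abstract Cauchy problem, with α-derivative u' and A u(t) = Au t :
    (u u' Au : ℝ → X)
    (hu0 : u 0 = u₀)
    (hucont : ContinuousOn u (Set.Ici 0))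
    (huderiv : ∀ t > (0:ℝ), HasConfDerivAt α u t (u' t))
    (hucont' : ContinuousOn u' (Set.Ioi 0))
    (hdom : ∀ t > (0:ℝ), Filter.Tendsto (fun s => T' s (u t)) (𝓝[>] 0) (𝓝 (Au t)))
    (heq : ∀ t > (0:ℝ), u' t = Au t) :
    ∀ t ≥ (0:ℝ), u t = T t u₀ :=
  conf_abstract_cauchy_uniqueness_general α hα T T' hT0 hlaw hc0 hTderiv u₀ u u' Au hu0 hucont
    huderiv hdom heq
end
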